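/- arXiv:1611.05572 — 4 statements merged into one kernel-verified Lean document; each statement's English description precedes it below -/
import Mathlib

section
/- Fix an integer k ≥ 0 and let b > 1 satisfy b^{k+1} - b^k = 1. Define x_i := b^i for i ∈ ℤ. Then the sequence (x_i) is strictly increasing with values in (0,∞), the spacings y_i := x_{i+1} - x_i are all distinct, and the set of spacings {y_i : i ∈ ℤ} equals the set {x_i : i ∈ ℤ}; in fact y_i = x_{i-k} for all i. -/
open Set

/-- For `b > 1` with `b^(k+1) - b^k = 1` and `x_i := b^i` (`i ∈ ℤ`): the sequence is
strictly increasing and positive, the spacings `y_i = x_{i+1} - x_i` are all distinct,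
`{y_i} = {x_i}` as sets, and indeed `y_i = x_{i-k}` for all `i`. -/
theorem stmt13 (k : ℕ) (b : ℝ) (hb : 1 < b) (heq : b ^ (k + 1) - b ^ k = 1)
    (x : ℤ → ℝ) (hx : ∀ i : ℤ, x i = b ^ i)
    (y : ℤ → ℝ) (hy : ∀ i : ℤ, y i = x (i + 1) - x i) :
    StrictMono x ∧ (∀ i : ℤ, 0 < x i) ∧ Function.Injective y ∧
    Set.range y = Set.range x ∧ ∀ i : ℤ, y i = x (i - k) := by
  have hb0 : (0:ℝ) < b := lt_trans zero_lt_one hb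
  have hbne : (b:ℝ) ≠ 0 := ne_of_gt hb0
  have hmono : StrictMono x := by
    intro m n h
    rw [hx, hx]
    exact zpow_lt_zpow_right₀ hb h
  have hkey : ∀ i : ℤ, y i = x (i - k) := by
    intro i
    rw [hy, hx, hx, hx]
    have h1 : (b:ℝ) ^ (i + 1) = b ^ (i - k) * b ^ ((k : ℤ) + 1) := by
      rw [← zpow_add₀ hbne]; ring_nf
    have h2 : (b:ℝ) ^ i = b ^ (i - k) * b ^ (k : ℤ) := by
      rw [← zpow_add₀ hbne]; ring_nf
    have heq' : (b:ℝ) ^ ((k : ℤ) + 1) - b ^ (k : ℤ) = 1 := by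
      rw [show ((k:ℤ)+1) = ((k+1 : ℕ) : ℤ) by push_cast; ring, zpow_natCast, zpow_natCast]
      exact heq
    rw [h1, h2, ← mul_sub, heq', mul_one]
  refine ⟨hmono, fun i => by rw [hx]; exact zpow_pos hb0 i, ?_, ?_, hkey⟩
  · intro m n h
    rw [hkey, hkey] at h
    have := hmono.injective h
    omega
  · ext v
    constructor
    · rintro ⟨i, rfl⟩; exact ⟨i - k, (hkey i).symm⟩
    · rintro ⟨j, rfl⟩
      refine ⟨j + k, ?_⟩
      rw [hkey]; congr 1; omega
end

section
/- Let (x_i)_{i∈ℤ} be a strictly increasing doubly infinite sequence in (0,∞) such that the spacings y_i := x_{i+1} - x_i are all distinct and the set {y_i : i ∈ ℤ} equals {x_i : i ∈ ℤ}. Then for every i, y_i ≤ x_i, and consequently x_{i+1} ≤ 2·x_i; equivalently, the ratios r_i := x_{i-1}/x_i all lie in [1/2, 1). -/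
open Set

/-- If `(x_i)_{i∈ℤ}` is strictly increasing in `(0,∞)` with all spacings
`y_i := x (i + 1) - x i` distinct and `{y_i} = {x_i}` as sets, then `y_i ≤ x_i`,
hence `x_{i+1} ≤ 2 x_i`, i.e. `x_{i-1}/x_i ∈ [1/2, 1)` for all `i`. -/
theorem stmt14 (x : ℤ → ℝ) (hpos : ∀ i : ℤ, 0 < x i) (hmono : StrictMono x)
    (y : ℤ → ℝ) (hy : ∀ i : ℤ, y i = x (i + 1) - x i)
    (hinj : Function.Injective y) (hrange : Set.range y = Set.range x) :
    ∀ i : ℤ, y i ≤ x i ∧ x (i + 1) ≤ 2 * x i ∧ x (i - 1) / x i ∈ Ico (1/2 : ℝ) 1 := by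
  have key : ∀ i : ℤ, y i ≤ x i := by
    intro i
    have hmem : y i ∈ Set.range x := by rw [← hrange]; exact ⟨i, rfl⟩
    obtain ⟨j, hj⟩ := hmem
    by_contra h
    push_neg at h
    have hji : i + 1 ≤ j := by
      by_contra hj'
      push_neg at hj'
      have hle : x j ≤ x i := hmono.monotone (by omega)
      rw [hj] at hle; linarith
    have hle : x (i + 1) ≤ x j := hmono.monotone hji
    rw [hj] at hle
    have hyi := hy i
    have hp := hpos i
    linarith
  intro i
  have h1 := key i
  have hyi := hy i
  have h2 : x (i + 1) ≤ 2 * x i := by linarith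
  refine ⟨h1, h2, ?_, ?_⟩
  · have h3 := key (i - 1)
    have hyi' := hy (i - 1)
    have hEq : i - 1 + 1 = i := by ring
    rw [hEq] at hyi'
    rw [le_div_iff₀ (hpos i)]
    linarith
  · rw [div_lt_one (hpos i)]
    exact hmono (by omega)
end

section
/- Let π be a permutation of ℤ with π(i) ≤ i for all i. Then there exists a doubly infinite sequence (x_i)_{i∈ℤ} of strictly positive reals with x_{i+1} = x_i + x_{π(i)} for all i ∈ ℤ. -/
open Filter Topology

noncomputable def seqAux (π : Equiv.Perm ℤ) (hπ : ∀ i : ℤ, π i ≤ i) (N : ℕ) : ℤ → ℝ :=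
  fun j =>
    if h : j ≤ -(N : ℤ) then (2 : ℝ) ^ j
    else seqAux π hπ N (j - 1) + seqAux π hπ N (π (j - 1))
termination_by j => (j + N).toNat
decreasing_by
  · omega
  · rename_i j
    have := hπ (j - 1); omega

lemma seqAux_pos (π : Equiv.Perm ℤ) (hπ : ∀ i : ℤ, π i ≤ i) (N : ℕ) :
    ∀ j, 0 < seqAux π hπ N j := by
  have key : ∀ n : ℕ, ∀ j : ℤ, (j + N).toNat ≤ n → 0 < seqAux π hπ N j := by
    intro n
    induction n with
    | zero =>
      intro j hj
      rw [seqAux, dif_pos (by omega)]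
      positivity
    | succ n ih =>
      intro j hj
      rw [seqAux]
      by_cases h : j ≤ -(N : ℤ)
      · rw [dif_pos h]; positivity
      · rw [dif_neg h]
        have h1 := ih (j - 1) (by omega)
        have h2 := ih (π (j - 1)) (by have := hπ (j - 1); omega)
        linarith
  exact fun j => key _ j le_rfl

lemma seqAux_strictMono (π : Equiv.Perm ℤ) (hπ : ∀ i : ℤ, π i ≤ i) (N : ℕ) :
    StrictMono (seqAux π hπ N) := by
  apply strictMono_int_of_lt_succ
  intro j
  by_cases h : j + 1 ≤ -(N : ℤ)
  · rw [seqAux, dif_pos (by omega : j ≤ -(N:ℤ))]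
    conv_rhs => rw [seqAux, dif_pos h]
    exact zpow_lt_zpow_right₀ one_lt_two (by omega)
  · conv_rhs => rw [seqAux]
    rw [dif_neg h]
    simp only [add_sub_cancel_right]
    have := seqAux_pos π hπ N (π j)
    linarith

lemma seqAux_succ_le (π : Equiv.Perm ℤ) (hπ : ∀ i : ℤ, π i ≤ i) (N : ℕ) (j : ℤ) :
    seqAux π hπ N (j + 1) ≤ 2 * seqAux π hπ N j := by
  by_cases h : j + 1 ≤ -(N : ℤ)
  · rw [seqAux, dif_pos h]
    conv_rhs => rw [seqAux, dif_pos (by omega : j ≤ -(N:ℤ))]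
    rw [zpow_add_one₀ (by norm_num : (2:ℝ) ≠ 0)]
    linarith
  · conv_lhs => rw [seqAux, dif_neg h]
    simp only [add_sub_cancel_right]
    have hm : seqAux π hπ N (π j) ≤ seqAux π hπ N j :=
      (seqAux_strictMono π hπ N).monotone (hπ j)
    linarith

lemma seqAux_geom (π : Equiv.Perm ℤ) (hπ : ∀ i : ℤ, π i ≤ i) (N : ℕ) (j : ℤ) :
    ∀ k, j ≤ k → seqAux π hπ N k ≤ 2 ^ (k - j) * seqAux π hπ N j := by
  refine Int.le_induction ?_ ?_
  · simp
  · intro n hn ih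
    have h1 := seqAux_succ_le π hπ N n
    have h2 : (2:ℝ) ^ (n + 1 - j) = 2 * 2 ^ (n - j) := by
      rw [show n + 1 - j = (n - j) + 1 by ring, zpow_add_one₀ (by norm_num : (2:ℝ) ≠ 0)]
      ring
    rw [h2]
    nlinarith [seqAux_pos π hπ N n, seqAux_pos π hπ N j]

/-- For every permutation `π` of `ℤ` with `π(i) ≤ i` for all `i`, there exists a doubly
infinite sequence of positive reals with `x_{i+1} = x_i + x_{π(i)}` for all `i`. -/
theorem stmt15 (π : Equiv.Perm ℤ) (hπ : ∀ i : ℤ, π i ≤ i) :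
    ∃ x : ℤ → ℝ, (∀ i : ℤ, 0 < x i) ∧ ∀ i : ℤ, x (i + 1) = x i + x (π i) := by
  classical
  set y : ℕ → ℤ → ℝ := fun N j => seqAux π hπ N j / seqAux π hπ N 0 with hy
  have hpos : ∀ N j, 0 < seqAux π hπ N j := fun N => seqAux_pos π hπ N
  set lb : ℤ → ℝ := fun i => min ((2:ℝ) ^ i) 1 with hlb
  set ub : ℤ → ℝ := fun i => max ((2:ℝ) ^ i) 1 with hub
  have hlbpos : ∀ i, 0 < lb i := fun i => lt_min (by positivity) one_pos
  have hmem : ∀ N i, y N i ∈ Set.Icc (lb i) (ub i) := by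
    intro N i
    have h0 := hpos N 0
    constructor
    · rw [hy]
      rw [le_div_iff₀ h0]
      rcases le_or_gt 0 i with hi | hi
      · calc lb i * seqAux π hπ N 0 ≤ 1 * seqAux π hπ N 0 := by
              have : lb i ≤ 1 := min_le_right _ _
              nlinarith
          _ ≤ seqAux π hπ N i := by
              rw [one_mul]
              exact (seqAux_strictMono π hπ N).monotone hi
      · have hg := seqAux_geom π hπ N i 0 (le_of_lt hi)
        have : lb i ≤ (2:ℝ) ^ i := min_le_left _ _
        have h2 : (2:ℝ) ^ (0 - i) * (2:ℝ) ^ i = 1 := by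
          rw [← zpow_add₀ (by norm_num : (2:ℝ) ≠ 0)]; norm_num
        have hp : (0:ℝ) < (2:ℝ) ^ i := by positivity
        have hp2 : (0:ℝ) < (2:ℝ) ^ (0 - i) := by positivity
        have hi' := hpos N i
        nlinarith
    · rw [hy]
      rw [div_le_iff₀ h0]
      rcases le_or_gt 0 i with hi | hi
      · have hg := seqAux_geom π hπ N 0 i hi
        have : (2:ℝ) ^ (i - 0) ≤ ub i := by
          simp only [sub_zero]
          exact le_max_left _ _
        nlinarith [hpos N i]
      · have hmono := (seqAux_strictMono π hπ N).monotone (le_of_lt hi)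
        have : (1:ℝ) ≤ ub i := le_max_right _ _
        nlinarith [hpos N i]
  have hrec : ∀ N : ℕ, ∀ i : ℤ, -(N:ℤ) ≤ i → y N (i + 1) = y N i + y N (π i) := by
    intro N i hi
    have hstep : seqAux π hπ N (i + 1) = seqAux π hπ N i + seqAux π hπ N (π i) := by
      rw [seqAux, dif_neg (by omega)]
      simp only [add_sub_cancel_right]
    rw [hy]
    simp only
    rw [hstep, add_div]
  set F : Ultrafilter ℕ := Ultrafilter.of atTop with hF
  have hFle : (F : Filter ℕ) ≤ atTop := Ultrafilter.of_le _
  have hlim : ∀ i : ℤ, ∃ a ∈ Set.Icc (lb i) (ub i),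
      Tendsto (fun N => y N i) (F : Filter ℕ) (𝓝 a) := by
    intro i
    have hc : IsCompact (Set.Icc (lb i) (ub i)) := isCompact_Icc
    have hmap : (F.map (fun N => y N i) : Filter ℝ) ≤ 𝓟 (Set.Icc (lb i) (ub i)) := by
      rw [Filter.le_principal_iff]
      exact Filter.mem_map.mpr (Filter.univ_mem' (fun N => hmem N i))
    obtain ⟨a, ha, hle⟩ := hc.ultrafilter_le_nhds _ hmap
    exact ⟨a, ha, hle⟩
  choose a ha hta using hlim
  refine ⟨a, ?_, ?_⟩
  · intro i
    exact lt_of_lt_of_le (hlbpos i) (ha i).1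
  · intro i
    have h1 : Tendsto (fun N => y N (i + 1)) (F : Filter ℕ) (𝓝 (a (i + 1))) := hta _
    have h2 : Tendsto (fun N => y N i + y N (π i)) (F : Filter ℕ) (𝓝 (a i + a (π i))) :=
      (hta i).add (hta (π i))
    have heq : ∀ᶠ N in (F : Filter ℕ), y N (i + 1) = y N i + y N (π i) := by
      apply Filter.Eventually.filter_mono hFle
      filter_upwards [eventually_ge_atTop (-i).toNat] with N hN
      exact hrec N i (by omega)
    exact tendsto_nhds_unique h1 (h2.congr' (heq.mono fun N h => h.symm))
end

section
/- Let π be a permutation of ℤ with π(i) ≤ i for all i and with k := sup{i - π(i) : i ≤ 0} < ∞. If (x_i) and (x'_i) are two sequences of positive reals both satisfying x_{i+1} = x_i + x_{π(i)} for all i ∈ ℤ, then there exists c > 0 with x'_i = c·x_i for all i ∈ ℤ. -/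
/-!
For a lag `p` with `p i ≤ i`, nonnegative solutions are monotone and at most double at each
step. The core estimate is that two positive solutions are comparable: `ε x ≤ w` for some
`ε > 0`. Hence `c = ⨅ i, x' i / x i` is positive and `x' - c x` is a nonnegative solution. A
nonnegative solution vanishing at one point vanishes everywhere, and if `x' - c x` were
positive it would dominate some `δ x`, contradicting the choice of `c`.
-/

def IsSolution (p : ℤ → ℤ) (x : ℤ → ℝ) : Prop :=
  ∀ i, x (i + 1) = x i + x (p i)

namespace IsSolution

variable {p : ℤ → ℤ} {x w : ℤ → ℝ}

lemma sub_smul (hx : IsSolution p x) (hw : IsSolution p w) (c : ℝ) :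
    IsSolution p (w - c • x) := by
  intro i
  simp only [Pi.sub_apply, Pi.smul_apply, smul_eq_mul, hx i, hw i]
  ring

lemma monotone (hx : IsSolution p x) (h0 : ∀ i, 0 ≤ x i) : Monotone x :=
  monotone_int_of_le_succ fun i => by rw [hx i]; linarith [h0 (p i)]

lemma le_two_pow_mul (hp : ∀ i, p i ≤ i) (hx : IsSolution p x) (h0 : ∀ i, 0 ≤ x i) (j : ℤ) :
    ∀ t : ℕ, x (j + t) ≤ 2 ^ t * x j
  | 0 => by simp
  | t + 1 => by
    have hlag : x (p (j + t)) ≤ x (j + t) := hx.monotone h0 (hp _)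
    have ih := le_two_pow_mul hp hx h0 j t
    rw [Nat.cast_succ, ← add_assoc, hx, pow_succ]
    linarith

lemma eq_zero_or_pos (hp : ∀ i, p i ≤ i) (hx : IsSolution p x) (h0 : ∀ i, 0 ≤ x i) :
    x = 0 ∨ ∀ i, 0 < x i := by
  refine or_iff_not_imp_right.2 fun hpos => ?_
  obtain ⟨b, hb_nonpos⟩ : ∃ b, x b ≤ 0 := by simpa using hpos
  have hb : x b = 0 := le_antisymm hb_nonpos (h0 b)
  ext i
  rcases le_total i b with hib | hbi
  · exact le_antisymm (hb ▸ hx.monotone h0 hib :) (h0 i)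
  · induction i, hbi using Int.leInduction with
    | base => exact hb
    | succ i _ ih =>
      have hlag : x (p i) ≤ x i := hx.monotone h0 (hp i)
      have hlag₀ := h0 (p i)
      simp only [Pi.zero_apply] at ih ⊢
      rw [hx i]
      linarith

/-- Points with `w < δ x` are unbounded below: at the least one, `j`, the recurrence would
transfer `w < δ x` to `j - 1` or `p (j - 1)`. -/
lemma exists_le_lt_mul (hp : ∀ i, p i ≤ i) (hx : IsSolution p x) (hw : IsSolution p w)
    {δ : ℝ} {i : ℤ} (hi : w i < δ * x i) (n : ℤ) : ∃ j ≤ n, w j < δ * x j := by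
  by_contra! hn
  obtain ⟨j, hj, hleast⟩ := Int.exists_least_of_bdd (P := fun j => w j < δ * x j)
    ⟨n + 1, fun z hz => by by_contra! hzn; exact (hn z (by omega)).not_gt hz⟩ ⟨i, hi⟩
  have hlt := hp (j - 1)
  rw [← sub_add_cancel j 1, hx, hw] at hj
  by_cases h1 : w (j - 1) < δ * x (j - 1)
  · linarith [hleast _ h1]
  by_cases h2 : w (p (j - 1)) < δ * x (p (j - 1))
  · linarith [hleast _ h2]
  linarith

lemma lt_mul_of_lt_mul_on_window (hp : ∀ i, p i ≤ i) {k : ℤ} (hk : ∀ i ≤ 0, i - p i ≤ k)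
    (hx : IsSolution p x) (hw : IsSolution p w) {δ : ℝ} {m : ℤ}
    (hwin : ∀ j ∈ Set.Icc (m - k) m, w j < δ * x j) : ∀ n ∈ Set.Icc m 0, w n < δ * x n := by
  have hk₀ : 0 ≤ k := by linarith [hk 0 le_rfl, hp 0]
  suffices ∀ n, m ≤ n → n ≤ 0 → ∀ j ∈ Set.Icc (m - k) n, w j < δ * x j from
    fun n hn => this n hn.1 hn.2 n ⟨by linarith [hn.1], le_rfl⟩
  intro n hmn
  induction n, hmn using Int.leInduction with
  | base => exact fun _ => hwin
  | succ n hmn ih =>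
    intro hn j ⟨hj₁, hj₂⟩
    have ih := ih (by omega)
    rcases hj₂.lt_or_eq with hj | rfl
    · exact ih j ⟨hj₁, by omega⟩
    have hlag := ih (p n) ⟨by linarith [hk n (by omega)], hp n⟩
    have hcur := ih n ⟨by omega, le_rfl⟩
    rw [hx, hw]
    linarith

/-- With `ε = w 0 / x 0`, a point `m ≤ 0` where `w < (ε / 2 ^ k) x` yields, by monotonicity of
`w` and the doubling bound for `x`, a whole window ending at `m` where `w < ε x`; this spreads
up to `0`, where `w 0 = ε x 0`. -/
lemma exists_pos_mul_le (hp : ∀ i, p i ≤ i) {k : ℤ} (hk : ∀ i ≤ 0, i - p i ≤ k)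
    (hx : IsSolution p x) (hw : IsSolution p w) (hx₀ : ∀ i, 0 < x i) (hw₀ : ∀ i, 0 < w i) :
    ∃ ε > 0, ∀ i, ε * x i ≤ w i := by
  by_contra! hsmall
  set ε := w 0 / x 0
  set K : ℝ := 2 ^ k.toNat
  have hε : 0 < ε := div_pos (hw₀ 0) (hx₀ 0)
  have hK : 0 < K := by positivity
  obtain ⟨i, hi⟩ := hsmall (ε / K) (by positivity)
  obtain ⟨m, hm, hwm⟩ := exists_le_lt_mul hp hx hw hi 0
  have hwin : ∀ j ∈ Set.Icc (m - k) m, w j < ε * x j := by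
    rintro j ⟨hj₁, hj₂⟩
    have hxm : x m ≤ K * x j := calc
      x m = x (j + (m - j).toNat) := by congr 1; omega
      _ ≤ 2 ^ (m - j).toNat * x j := hx.le_two_pow_mul hp (fun i => (hx₀ i).le) j _
      _ ≤ 2 ^ k.toNat * x j := by gcongr; exacts [(hx₀ j).le, one_le_two, by omega]
    calc w j ≤ w m := hw.monotone (fun i => (hw₀ i).le) hj₂
      _ < ε / K * x m := hwm
      _ ≤ ε / K * (K * x j) := by gcongr
      _ = ε * x j := by field_simp
  have h0 := hx.lt_mul_of_lt_mul_on_window hp hk hw hwin 0 ⟨hm, le_rfl⟩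
  have : ε * x 0 = w 0 := div_mul_cancel₀ _ (hx₀ 0).ne'
  linarith

end IsSolution

/-- If `π` is a permutation of `ℤ` with `π(i) ≤ i` and bounded displacements
`i - π(i) ≤ k` for `i ≤ 0`, then any two positive solutions of
`x_{i+1} = x_i + x_{π(i)}` agree up to a positive scalar multiple. -/
theorem stmt16 (π : Equiv.Perm ℤ) (hπ : ∀ i : ℤ, π i ≤ i)
    (k : ℤ) (hk : ∀ i : ℤ, i ≤ 0 → i - π i ≤ k)
    (x x' : ℤ → ℝ) (hx : ∀ i : ℤ, 0 < x i) (hx' : ∀ i : ℤ, 0 < x' i)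
    (hrec : ∀ i : ℤ, x (i + 1) = x i + x (π i))
    (hrec' : ∀ i : ℤ, x' (i + 1) = x' i + x' (π i)) :
    ∃ c : ℝ, 0 < c ∧ ∀ i : ℤ, x' i = c * x i := by
  have hsol : IsSolution π x := hrec
  have hsol' : IsSolution π x' := hrec'
  obtain ⟨ε, hε, hεx⟩ := hsol.exists_pos_mul_le hπ hk hsol' hx hx'
  set c := ⨅ i, x' i / x i
  have hc : ∀ i, c * x i ≤ x' i := fun i =>
    (le_div_iff₀ (hx i)).1 (ciInf_le ⟨0, by rintro _ ⟨j, rfl⟩; exact (div_pos (hx' j) (hx j)).le⟩ i)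
  have hεc : ε ≤ c := le_ciInf fun i => (le_div_iff₀ (hx i)).2 (hεx i)
  rcases (hsol.sub_smul hsol' c).eq_zero_or_pos hπ (fun i => by simp [hc i]) with h | hpos
  · refine ⟨c, hε.trans_le hεc, fun i => ?_⟩
    simpa [sub_eq_zero] using congrFun h i
  · obtain ⟨δ, hδ, hδy⟩ := hsol.exists_pos_mul_le hπ hk (hsol.sub_smul hsol' c) hx hpos
    have : c + δ ≤ c := le_ciInf fun i => (le_div_iff₀ (hx i)).2 (by
      have := hδy i; simp only [Pi.sub_apply, Pi.smul_apply, smul_eq_mul] at this; linarith)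
    linarith
end
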